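/- arXiv:2604.22007 — 2 statements merged into one kernel-verified Lean document; each statement's English description precedes it below -/
import Mathlib

section
/- Let n ≥ 1 and let w, u be words over {a_2, a_3, …, a_n} (i.e. not containing the letter a_1), with w canonical. Then there exists a word u* which is a (not necessarily contiguous) subsequence of u such that the word w a_1 u* is canonical and φ(w a_1 u*) = φ(w a_1 u); that is, the canonical form of w a_1 u equals w a_1 u* for some quasi-subword u* of u. -/
namespace Kiselman

/-- The defining relations of Kiselman's semigroup on the free monoid over `Fin n`,
where the index `i : Fin n` represents the generator `a_{i+1}` (so letters are 0-based). -/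
def Rel (n : ℕ) : FreeMonoid (Fin n) → FreeMonoid (Fin n) → Prop := fun u v =>
  (∃ i : Fin n, u = .of i * .of i ∧ v = .of i) ∨
  (∃ i j : Fin n, j < i ∧
    ((u = .of i * .of j * .of i ∧ v = .of i * .of j) ∨
     (u = .of j * .of i * .of j ∧ v = .of i * .of j)))

/-- Kiselman's semigroup (monoid) `K n`, presented by the relations `Rel n`. -/
def K (n : ℕ) : Type := (conGen (Rel n)).Quotient

instance (n : ℕ) : Monoid (K n) := inferInstanceAs (Monoid (conGen (Rel n)).Quotient)

/-- The canonical epimorphism `φ` from the free monoid onto `K n`. -/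
def phi (n : ℕ) : FreeMonoid (Fin n) →* K n := Con.mk' _

/-- `φ` applied to a word given as a list of (0-based) letters. -/
def phiL (n : ℕ) (w : List (Fin n)) : K n := phi n (FreeMonoid.ofList w)

/-- The generator `a_{i+1}` of `K n` (`i` is the 0-based index). -/
def gen {n : ℕ} (i : Fin n) : K n := phi n (FreeMonoid.of i)

/-- The word `a_hi a_{hi-1} ⋯ a_lo` (letters named 1-based), as a list of 0-based indices:
`[hi-1, hi-2, …, lo-1]` (capped at `n`). -/
def descList (n lo hi : ℕ) : List (Fin n) :=
  ((List.finRange n).filter (fun k => decide (lo ≤ k.val + 1 ∧ k.val + 1 ≤ hi))).reverse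

/-- The zero element `f = a_n a_{n-1} ⋯ a_2 a_1` of `K n`. -/
def fEl (n : ℕ) : K n := phiL n (descList n 1 n)

/-- A word `w` is canonical if for every factorization `w = p ++ [i] ++ u ++ [i] ++ q`
there are letters `j > i` and `k < i` occurring in `u`. -/
def Canonical {n : ℕ} (w : List (Fin n)) : Prop :=
  ∀ (p u q : List (Fin n)) (i : Fin n),
    w = p ++ [i] ++ u ++ [i] ++ q →
    (∃ j ∈ u, i < j) ∧ (∃ k ∈ u, k < i)

/-- The submonoid of `K n` generated by `{a_2, a_3, …, a_n}`. -/
def upper (n : ℕ) : Submonoid (K n) := Submonoid.closure (gen '' {i : Fin n | i.val ≠ 0})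

/-- The submonoid of `K n` generated by `{a_1, a_2, …, a_{n-1}}`. -/
def lower (n : ℕ) : Submonoid (K n) := Submonoid.closure (gen '' {i : Fin n | i.val + 1 ≠ n})

/-- `m(x) = min { i ∈ {0,…,n} : x ⬝ (a_i a_{i-1} ⋯ a_1) = f }`. -/
noncomputable def mIdx {n : ℕ} (x : K n) : ℕ :=
  sInf {i : ℕ | x * phiL n (descList n 1 i) = fEl n}

variable {n : ℕ}

lemma phi_rel {a b : FreeMonoid (Fin n)} (h : Rel n a b) : phi n a = phi n b :=
  (Con.eq _).2 (ConGen.Rel.of _ _ h)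

lemma gen_idem (i : Fin n) : gen i * gen i = gen i := by
  have : phi n (.of i * .of i) = phi n (.of i) := phi_rel (Or.inl ⟨i, rfl, rfl⟩)
  simpa [gen, map_mul] using this

lemma gen_iji {i j : Fin n} (h : j < i) : gen i * gen j * gen i = gen i * gen j := by
  have : phi n (.of i * .of j * .of i) = phi n (.of i * .of j) :=
    phi_rel (Or.inr ⟨i, j, h, Or.inl ⟨rfl, rfl⟩⟩)
  simpa [gen, map_mul] using this

lemma gen_jij {i j : Fin n} (h : j < i) : gen j * gen i * gen j = gen i * gen j := by
  have : phi n (.of j * .of i * .of j) = phi n (.of i * .of j) :=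
    phi_rel (Or.inr ⟨i, j, h, Or.inr ⟨rfl, rfl⟩⟩)
  simpa [gen, map_mul] using this

lemma phiL_nil : phiL n [] = 1 := map_one (phi n)
lemma phiL_append (a b : List (Fin n)) : phiL n (a ++ b) = phiL n a * phiL n b := by
  simp [phiL, FreeMonoid.ofList_append, map_mul]
lemma phiL_cons (x : Fin n) (a : List (Fin n)) : phiL n (x :: a) = gen x * phiL n a := by
  simp [phiL, gen, FreeMonoid.ofList_cons, map_mul]
lemma phiL_singleton (x : Fin n) : phiL n [x] = gen x := by
  simp [phiL, gen, FreeMonoid.ofList_singleton]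

lemma idem' (i : Fin n) (X : K n) : gen i * (gen i * X) = gen i * X := by
  rw [← mul_assoc, gen_idem]

lemma iji' {i j : Fin n} (h : j < i) (X : K n) :
    gen i * (gen j * (gen i * X)) = gen i * (gen j * X) := by
  rw [← mul_assoc, ← mul_assoc, gen_iji h, mul_assoc]

lemma jij_swap {i j : Fin n} (h : i < j) (X : K n) :
    gen i * (gen j * (gen i * X)) = gen j * (gen i * X) := by
  rw [← mul_assoc, ← mul_assoc, gen_jij h, mul_assoc]

lemma absorbR (i : Fin n) : ∀ m : List (Fin n), (∀ x ∈ m, x < i) →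
    ∀ X : K n, gen i * (phiL n m * (gen i * X)) = gen i * (phiL n m * X) := by
  intro m
  induction m with
  | nil => intro _ X; simp only [phiL_nil, one_mul]; exact idem' i X
  | cons j v ih =>
    intro hm X
    have hj : j < i := hm j List.mem_cons_self
    have hv : ∀ x ∈ v, x < i := fun x hx => hm x (List.mem_cons_of_mem _ hx)
    simp only [phiL_cons, mul_assoc]
    calc gen i * (gen j * (phiL n v * (gen i * X)))
        = gen i * (gen j * (gen i * (phiL n v * (gen i * X)))) := (iji' hj _).symm
      _ = gen i * (gen j * (gen i * (phiL n v * X))) := by rw [ih hv X]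
      _ = gen i * (gen j * (phiL n v * X)) := iji' hj _

lemma absorbL (i : Fin n) : ∀ m : List (Fin n), (∀ x ∈ m, i < x) →
    ∀ X : K n, gen i * (phiL n m * (gen i * X)) = phiL n m * (gen i * X) := by
  intro m
  induction m using List.reverseRecOn with
  | nil => intro _ X; simp only [phiL_nil, one_mul]; exact idem' i X
  | append_singleton v j ih =>
    intro hm X
    have hj : i < j := hm j (by simp)
    have hv : ∀ x ∈ v, i < x := fun x hx => hm x (by simp [hx])
    simp only [phiL_append, phiL_singleton, mul_assoc]
    calc gen i * (phiL n v * (gen j * (gen i * X)))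
        = gen i * (phiL n v * (gen i * (gen j * (gen i * X)))) :=
          congrArg (fun Y => gen i * (phiL n v * Y)) (jij_swap hj X).symm
      _ = phiL n v * (gen i * (gen j * (gen i * X))) := ih hv _
      _ = phiL n v * (gen j * (gen i * X)) := congrArg (phiL n v * ·) (jij_swap hj X)

lemma delete_second (p m q : List (Fin n)) (i : Fin n) (hm : ∀ x ∈ m, x < i) :
    phiL n (p ++ [i] ++ m ++ [i] ++ q) = phiL n (p ++ [i] ++ m ++ q) := by
  simp only [phiL_append, phiL_singleton, mul_assoc]
  congr 1
  exact absorbR i m hm (phiL n q)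

lemma delete_first (p m q : List (Fin n)) (i : Fin n) (hm : ∀ x ∈ m, i < x) :
    phiL n (p ++ [i] ++ m ++ [i] ++ q) = phiL n (p ++ m ++ [i] ++ q) := by
  simp only [phiL_append, phiL_singleton, mul_assoc]
  congr 1
  exact absorbL i m hm (phiL n q)

lemma split_helper {α : Type*} {A B p q : List α} (h : A ++ B = p ++ q)
    (hl : A.length ≤ p.length) : ∃ t, p = A ++ t ∧ B = t ++ q := by
  have h1 : A = p.take A.length := by
    have h2 := congrArg (List.take A.length) h
    rwa [List.take_left, List.take_append_of_le_length hl] at h2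
  refine ⟨p.drop A.length, ?_, ?_⟩
  · conv_lhs => rw [← List.take_append_drop A.length p]
    rw [← h1]
  · have h3 : A ++ B = A ++ (p.drop A.length ++ q) := by
      conv_lhs => rw [h]
      conv_lhs => rw [← List.take_append_drop A.length p]
      rw [← h1, List.append_assoc]
    exact List.append_cancel_left h3

lemma canonical_append {n : ℕ} {w : List (Fin n)} {c : Fin n} (hw : Canonical w)
    (hc : c ∉ w) : Canonical (w ++ [c]) := by
  intro p m q i h
  rcases List.eq_nil_or_concat q with rfl | ⟨q₁, y, rfl⟩
  · exfalso
    have h' : w ++ [c] = (p ++ [i] ++ m) ++ [i] := by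
      rw [h]; simp [List.append_assoc]
    obtain ⟨hw', hi⟩ := List.append_inj' h' rfl
    have hci : c = i := by simpa using hi
    exact hc (by rw [hw', hci]; simp)
  · have h' : w ++ [c] = (p ++ [i] ++ m ++ [i] ++ q₁) ++ [y] := by
      rw [h]; simp [List.append_assoc]
    obtain ⟨hw', _⟩ := List.append_inj' h' rfl
    exact hw p m q₁ i hw'

lemma refine_pair {n : ℕ} {P : Fin n → Prop} :
    ∀ (N : ℕ) (m p q : List (Fin n)) (i : Fin n) (v : List (Fin n)), m.length ≤ N →
      v = p ++ [i] ++ m ++ [i] ++ q → (∀ x ∈ m, P x) →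
      ∃ p' m' q', v = p' ++ [i] ++ m' ++ [i] ++ q' ∧ (∀ x ∈ m', P x) ∧ i ∉ m' := by
  intro N
  induction N with
  | zero =>
    intro m p q i v hN hv hP
    have hm : m = [] := List.length_eq_zero_iff.mp (Nat.le_zero.mp hN)
    exact ⟨p, m, q, hv, hP, by simp [hm]⟩
  | succ N ih =>
    intro m p q i v hN hv hP
    by_cases hi : i ∈ m
    · obtain ⟨m₁, m₂, rfl⟩ := List.append_of_mem hi
      refine ih m₁ p (m₂ ++ [i] ++ q) i v ?_ ?_ ?_
      · simp only [List.length_append, List.length_cons] at hN ⊢; omega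
      · rw [hv]; simp
      · exact fun x hx => hP x (by simp [hx])
    · exact ⟨p, m, q, hv, hP, hi⟩

lemma main_aux (n : ℕ) (z : Fin n) (hz : z.val = 0) (w : List (Fin n))
    (hw0 : ∀ i ∈ w, i.val ≠ 0) (hwzc : Canonical (w ++ [z])) :
    ∀ (N : ℕ) (u : List (Fin n)), u.length ≤ N → (∀ i ∈ u, i.val ≠ 0) →
      ∃ u', u'.Sublist u ∧ Canonical (w ++ [z] ++ u') ∧
        phiL n (w ++ [z] ++ u') = phiL n (w ++ [z] ++ u) := by
  intro N
  induction N with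
  | zero =>
    intro u hN _
    have hu : u = [] := List.length_eq_zero_iff.mp (Nat.le_zero.mp hN)
    subst hu
    exact ⟨[], List.Sublist.refl _, by simpa using hwzc, rfl⟩
  | succ N ih =>
    intro u hN hu0
    by_cases hcan : Canonical (w ++ [z] ++ u)
    · exact ⟨u, List.Sublist.refl _, hcan, rfl⟩
    rw [Canonical] at hcan
    push_neg at hcan
    obtain ⟨p, m, q, i, hv, hbad⟩ := hcan
    by_cases hA : ∃ j ∈ m, i < j
    · -- Case B: no letter smaller than i in the middle; delete the first i
      have hB : ∀ k ∈ m, i ≤ k := hbad hA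
      obtain ⟨p', m', q', hv', hP', hni⟩ :=
        refine_pair (P := fun x => i ≤ x) m.length m p q i _ le_rfl hv hB
      have hm' : ∀ x ∈ m', i < x := fun x hx =>
        lt_of_le_of_ne (hP' x hx) (fun e => hni (by rw [e]; exact hx))
      have hzw : z ∉ w := fun h => hw0 z h hz
      have hzu : z ∉ u := fun h => hu0 z h hz
      have hiz : i ≠ z := by
        intro e
        subst e
        have h1 := congrArg (List.count i) hv'
        simp [List.count_append, List.count_eq_zero_of_not_mem hzw,
          List.count_eq_zero_of_not_mem hzu] at h1
        omega
      by_cases hlen : (w ++ [z]).length ≤ p'.length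
      · -- the first i lies in u; delete it
        have hsplit : (w ++ [z]) ++ u = p' ++ ([i] ++ m' ++ [i] ++ q') := by
          rw [hv']; try simp [List.append_assoc]
        obtain ⟨t, hp, hu⟩ := split_helper hsplit hlen
        have hsub : (t ++ (m' ++ [i] ++ q')).Sublist u := by
          rw [hu]
          exact List.Sublist.append_left (List.sublist_cons_self i _) t
        have hlen' : (t ++ (m' ++ [i] ++ q')).length ≤ N := by
          have hlu := congrArg List.length hu
          simp [List.length_append] at hlu ⊢
          omega
        have hphi : phiL n ((w ++ [z]) ++ (t ++ (m' ++ [i] ++ q'))) =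
            phiL n ((w ++ [z]) ++ u) := by
          have e1 : (w ++ [z]) ++ (t ++ (m' ++ [i] ++ q')) = p' ++ m' ++ [i] ++ q' := by
            rw [hp]; simp [List.append_assoc]
          rw [e1, hv']
          exact (delete_first p' m' q' i hm').symm
        obtain ⟨u'', hs'', hc'', hp''⟩ :=
          ih (t ++ (m' ++ [i] ++ q')) hlen' (fun x hx => hu0 x (hsub.subset hx))
        exact ⟨u'', hs''.trans hsub, hc'', hp''.trans hphi⟩
      · exfalso
        push_neg at hlen
        have hl2 : (p' ++ [i]).length ≤ (w ++ [z]).length := by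
          simp [List.length_append] at hlen ⊢; omega
        have hsplit2 : (p' ++ [i]) ++ (m' ++ [i] ++ q') = (w ++ [z]) ++ u := by
          rw [hv']; try simp [List.append_assoc]
        obtain ⟨t, hWt, hq'⟩ := split_helper hsplit2 hl2
        rcases List.eq_nil_or_concat' t with rfl | ⟨t₁, y, rfl⟩
        · have h2 : w ++ [z] = p' ++ [i] := by simpa using hWt
          obtain ⟨_, h3⟩ := List.append_inj' h2 rfl
          have hzi : z = i := by simpa using h3
          exact hiz hzi.symm
        · have hWt' : w ++ [z] = (p' ++ [i] ++ t₁) ++ [y] := by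
            rw [hWt]; try simp [List.append_assoc]
          obtain ⟨hw', hy⟩ := List.append_inj' hWt' rfl
          have hyz : y = z := by simpa using hy.symm
          subst hyz
          by_cases hml : (t₁ ++ [y]).length ≤ m'.length
          · have hsplit3 : (t₁ ++ [y]) ++ u = m' ++ ([i] ++ q') := by
              rw [← hq']; simp [List.append_assoc]
            obtain ⟨r, hm'r, _⟩ := split_helper hsplit3 hml
            have hym : y ∈ m' := by rw [hm'r]; simp
            have hlt := hm' y hym
            rw [Fin.lt_def, hz] at hlt
            omega
          · push_neg at hml
            have hl3 : (m' ++ [i]).length ≤ (t₁ ++ [y]).length := by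
              simp [List.length_append] at hml ⊢; omega
            obtain ⟨r, htr, _⟩ := split_helper hq' hl3
            have hWeq : w ++ [y] = p' ++ [i] ++ m' ++ [i] ++ r := by
              rw [hWt, htr]; simp [List.append_assoc]
            obtain ⟨_, k, hk, hki⟩ := hwzc p' m' r i hWeq
            exact lt_asymm (hm' k hk) hki
    · -- Case A: no letter bigger than i in the middle; delete the second i
      push_neg at hA
      obtain ⟨p', m', q', hv', hP', hni⟩ :=
        refine_pair (P := fun x => x ≤ i) m.length m p q i _ le_rfl hv hA
      have hm' : ∀ x ∈ m', x < i := fun x hx =>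
        lt_of_le_of_ne (hP' x hx) (fun e => hni (e ▸ hx))
      by_cases hlen : (w ++ [z]).length ≤ (p' ++ [i] ++ m').length
      · have hsplit : (w ++ [z]) ++ u = (p' ++ [i] ++ m') ++ ([i] ++ q') := by
          rw [hv']; try simp [List.append_assoc]
        obtain ⟨t, hp, hu⟩ := split_helper hsplit hlen
        have hsub : (t ++ q').Sublist u := by
          rw [hu]
          exact List.Sublist.append_left (List.sublist_cons_self i q') t
        have hlen' : (t ++ q').length ≤ N := by
          have hlu := congrArg List.length hu
          simp [List.length_append] at hlu ⊢
          omega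
        have hphi : phiL n ((w ++ [z]) ++ (t ++ q')) = phiL n ((w ++ [z]) ++ u) := by
          have e1 : (w ++ [z]) ++ (t ++ q') = p' ++ [i] ++ m' ++ q' := by
            rw [hp]; simp [List.append_assoc]
          rw [e1, hv']
          exact (delete_second p' m' q' i hm').symm
        obtain ⟨u'', hs'', hc'', hp''⟩ :=
          ih (t ++ q') hlen' (fun x hx => hu0 x (hsub.subset hx))
        exact ⟨u'', hs''.trans hsub, hc'', hp''.trans hphi⟩
      · exfalso
        push_neg at hlen
        have hl2 : ((p' ++ [i] ++ m') ++ [i]).length ≤ (w ++ [z]).length := by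
          simp [List.length_append] at hlen ⊢; omega
        have hsplit2 : ((p' ++ [i] ++ m') ++ [i]) ++ q' = (w ++ [z]) ++ u := by
          rw [hv']; try simp [List.append_assoc]
        obtain ⟨t, hWt, _⟩ := split_helper hsplit2 hl2
        have hWeq : w ++ [z] = p' ++ [i] ++ m' ++ [i] ++ t := by
          rw [hWt]; try simp [List.append_assoc]
        obtain ⟨⟨j, hj, hij⟩, _⟩ := hwzc p' m' t i hWeq
        exact lt_asymm hij (hm' j hj)


/-- If `w, u` are words over `{a_2, …, a_n}` and `w` is canonical, then the canonical
form of `w a_1 u` equals `w a_1 u*` for some quasi-subword `u*` of `u`. -/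
theorem canonical_form_wau (n : ℕ) (hn : 1 ≤ n) (w u : List (Fin n))
    (hw0 : ∀ i ∈ w, i.val ≠ 0) (hu0 : ∀ i ∈ u, i.val ≠ 0)
    (hwc : Canonical w) :
    ∃ u' : List (Fin n), u'.Sublist u ∧
      Canonical (w ++ (⟨0, by omega⟩ : Fin n) :: u') ∧
      phiL n (w ++ (⟨0, by omega⟩ : Fin n) :: u') =
        phiL n (w ++ (⟨0, by omega⟩ : Fin n) :: u) := by
  
  obtain ⟨u', hs, hc, hp⟩ := main_aux n ⟨0, by omega⟩ rfl w hw0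
    (canonical_append hwc (fun h => hw0 _ h rfl)) u.length u le_rfl hu0
  refine ⟨u', hs, ?_, ?_⟩
  · have e1 : w ++ (⟨0, by omega⟩ : Fin n) :: u' = w ++ [⟨0, by omega⟩] ++ u' := by simp
    rw [e1]; exact hc
  · have e1 : w ++ (⟨0, by omega⟩ : Fin n) :: u' = w ++ [⟨0, by omega⟩] ++ u' := by simp
    have e2 : w ++ (⟨0, by omega⟩ : Fin n) :: u = w ++ [⟨0, by omega⟩] ++ u := by simp
    rw [e1, e2]; exact hp
end Kiselman
end

section
/- Let n ≥ 1, let w be a canonical word over the alphabet A = {a_1, …, a_n}, and let u be a word over {a_2, a_3, …, a_n} (i.e. not containing the letter a_1). If φ(w u) = f in K_n, then w is the word a_n a_{n-1} ⋯ a_2 a_1. -/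
namespace Kiselman

/-! ### The scan invariant -/

/-- One step of the scan: letter `j` (1-based value `j+1`) decrements state `m` iff `j+1 = m`. -/
def step {n : ℕ} (j : Fin n) : ℕ → ℕ := fun m => if j.val + 1 = m then m - 1 else m

/-- Left-to-right scan of a word. -/
def scan {n : ℕ} : List (Fin n) → ℕ → ℕ
  | [], m => m
  | j :: t, m => scan t (step j m)

lemma scan_append {n : ℕ} (l₁ l₂ : List (Fin n)) (m : ℕ) :
    scan (l₁ ++ l₂) m = scan l₂ (scan l₁ m) := by
  induction l₁ generalizing m with
  | nil => rfl
  | cons j t ih => simp [scan, ih]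

lemma one_le_scan {n : ℕ} (u : List (Fin n)) (hu : ∀ i ∈ u, i.val ≠ 0) :
    ∀ s : ℕ, 1 ≤ s → 1 ≤ scan u s := by
  induction u with
  | nil => intro s hs; exact hs
  | cons j t ih =>
    intro s hs
    have hj := hu j (List.mem_cons_self)
    refine ih (fun i hi => hu i (List.mem_cons_of_mem _ hi)) _ ?_
    unfold step; split_ifs <;> omega

/-- The scan as a monoid hom into `(Function.End ℕ)ᵐᵒᵖ`. -/
def FF (n : ℕ) : FreeMonoid (Fin n) →* (Function.End ℕ)ᵐᵒᵖ :=
  FreeMonoid.lift (fun j => MulOpposite.op (step j))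

lemma op_mul_op (f g : Function.End ℕ) :
    (MulOpposite.op f) * (MulOpposite.op g) = MulOpposite.op (g * f) := rfl

lemma FF_ofList {n : ℕ} (l : List (Fin n)) :
    FF n (FreeMonoid.ofList l) = MulOpposite.op (fun m => scan l m) := by
  induction l with
  | nil => rfl
  | cons j t ih =>
    rw [FreeMonoid.ofList_cons, map_mul, ih, FF, FreeMonoid.lift_eval_of]
    rfl

lemma FF_rel {n : ℕ} : ∀ x y, Rel n x y → FF n x = FF n y := by
  rintro x y (⟨i, hx, hy⟩ | ⟨i, j, hij, (⟨hx, hy⟩ | ⟨hx, hy⟩)⟩) <;> subst hx hy <;>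
    simp only [map_mul, FF, FreeMonoid.lift_eval_of, op_mul_op] <;>
    refine congrArg MulOpposite.op (funext fun m => ?_)
  · show step i (step i m) = step i m
    unfold step; split_ifs <;> omega
  · have h : j.val < i.val := hij
    show step i (step j (step i m)) = step j (step i m)
    unfold step; split_ifs <;> omega
  · have h : j.val < i.val := hij
    show step j (step i (step j m)) = step j (step i m)
    unfold step; split_ifs <;> omega

/-- The induced hom on `K n`. -/
def PhiK (n : ℕ) : K n →* (Function.End ℕ)ᵐᵒᵖ :=
  Con.lift _ (FF n) (Con.conGen_le.2 fun x y h => (Con.ker_rel _).2 (FF_rel x y h))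

lemma PhiK_phiL {n : ℕ} (l : List (Fin n)) :
    PhiK n (phiL n l) = MulOpposite.op (fun m => scan l m) :=
  (Con.lift_mk' _ _).trans (FF_ofList l)

/-! ### Facts about `descList` -/

lemma mem_descList {n : ℕ} (c : ℕ) (x : Fin n) : x ∈ descList n 1 c ↔ x.val < c := by
  simp only [descList, List.mem_reverse, List.mem_filter, List.mem_finRange, true_and,
    decide_eq_true_eq]
  omega

lemma pairwise_descList {n : ℕ} (c : ℕ) : (descList n 1 c).Pairwise (· > ·) := by
  rw [descList, List.pairwise_reverse]
  exact (List.pairwise_lt_finRange n).sublist List.filter_sublist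

lemma descList_succ {n : ℕ} (c : ℕ) (hc : c < n) :
    descList n 1 (c + 1) = ⟨c, hc⟩ :: descList n 1 c := by
  have hpw : (⟨c, hc⟩ :: descList n 1 c).Pairwise (· > ·) := by
    refine List.Pairwise.cons (fun y hy => ?_) (pairwise_descList c)
    exact Fin.mk_lt_mk.mpr ((mem_descList c y).1 hy)
  have h1 : (descList n 1 (c+1)).Nodup := (pairwise_descList _).imp ne_of_gt
  have h2 : (⟨c, hc⟩ :: descList n 1 c).Nodup := hpw.imp ne_of_gt
  refine List.Perm.eq_of_pairwise' (pairwise_descList _) hpw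
    ((List.perm_ext_iff_of_nodup h1 h2).2 fun x => ?_)
  simp only [mem_descList, List.mem_cons, Fin.ext_iff, Fin.val_mk]
  omega

lemma descList_zero {n : ℕ} : descList n 1 0 = [] := by
  refine List.eq_nil_iff_forall_not_mem.2 fun x hx => ?_
  have := (mem_descList 0 x).1 hx
  omega

lemma scan_descList {n : ℕ} (c : ℕ) (hc : c ≤ n) : scan (descList n 1 c) c = 0 := by
  induction c with
  | zero => rw [descList_zero]; rfl
  | succ c ih =>
    rw [descList_succ c (by omega)]
    show scan (descList n 1 c) (step ⟨c, by omega⟩ (c+1)) = 0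
    have : step (n := n) ⟨c, by omega⟩ (c+1) = c := by unfold step; simp
    rw [this]
    exact ih (by omega)

/-! ### Combinatorics of canonical words -/

lemma canonical_suffix {n : ℕ} {a b : List (Fin n)} (h : Canonical (a ++ b)) : Canonical b := by
  intro p u q i hb
  exact h (a ++ p) u q i (by rw [hb]; simp)

lemma scan_split {n : ℕ} (w : List (Fin n)) (s : ℕ) (h : scan w s < s) :
    ∃ (α : List (Fin n)) (i : Fin n) (β : List (Fin n)),
      w = α ++ i :: β ∧ (∀ j ∈ α, j.val + 1 ≠ s) ∧ i.val + 1 = s ∧ scan w s = scan β (s - 1) := by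
  induction w with
  | nil => exact absurd h (by simp [scan])
  | cons j t ih =>
    by_cases hj : j.val + 1 = s
    · refine ⟨[], j, t, rfl, by simp, hj, ?_⟩
      show scan t (step j s) = scan t (s - 1)
      unfold step; rw [if_pos hj]
    · have hw : scan (j :: t) s = scan t s := by
        show scan t (step j s) = scan t s
        unfold step; rw [if_neg hj]
      rw [hw] at h
      obtain ⟨α, i, β, h1, h2, h3, h4⟩ := ih h
      exact ⟨j :: α, i, β, by simp [h1], by
        intro k hk
        rcases List.mem_cons.1 hk with rfl | hk
        · exact hj
        · exact h2 k hk, h3, by rw [hw, h4]⟩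

lemma exists_min {n : ℕ} (l : List (Fin n)) (hl : l ≠ []) :
    ∃ x ∈ l, ∀ y ∈ l, x.val ≤ y.val := by
  induction l with
  | nil => exact absurd rfl hl
  | cons a t ih =>
    rcases eq_or_ne t [] with rfl | ht
    · exact ⟨a, List.mem_cons_self, by simp⟩
    · obtain ⟨x, hx, hmin⟩ := ih ht
      by_cases hax : a.val ≤ x.val
      · refine ⟨a, List.mem_cons_self, fun y hy => ?_⟩
        rcases List.mem_cons.1 hy with rfl | hy
        · exact le_refl _
        · exact le_trans hax (hmin y hy)
      · refine ⟨x, List.mem_cons_of_mem _ hx, fun y hy => ?_⟩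
        rcases List.mem_cons.1 hy with rfl | hy
        · omega
        · exact hmin y hy

lemma exists_last_occ {n : ℕ} {x : Fin n} : ∀ {l : List (Fin n)}, x ∈ l →
    ∃ s t, l = s ++ x :: t ∧ x ∉ t := by
  intro l hx
  induction l with
  | nil => exact absurd hx List.not_mem_nil
  | cons b l' ih =>
    by_cases hx' : x ∈ l'
    · obtain ⟨s, t, h1, h2⟩ := ih hx'
      exact ⟨b :: s, t, by simp [h1], h2⟩
    · rcases List.mem_cons.1 hx with rfl | hx2
      · exact ⟨[], l', rfl, hx'⟩
      · exact absurd hx2 hx'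

/-- The main combinatorial lemma: a canonical word over letters `< c` whose scan from `c`
reaches `0` is exactly the descending word. -/
lemma main_comb {n : ℕ} : ∀ (c : ℕ), c ≤ n → ∀ (w : List (Fin n)), Canonical w →
    (∀ i ∈ w, i.val < c) → scan w c = 0 → w = descList n 1 c := by
  intro c
  induction c with
  | zero =>
    intro _ w _ hb _
    rw [descList_zero]
    cases w with
    | nil => rfl
    | cons a t => exact absurd (hb a (List.mem_cons_self)) (by omega)
  | succ c ih =>
    intro hc w hwc hb hs
    obtain ⟨α, i, β, hw, hα, hi, hscan⟩ := scan_split w (c + 1) (by omega)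
    have hival : i.val = c := by omega
    have hieq : i = ⟨c, by omega⟩ := Fin.ext hival
    rw [hs] at hscan
    -- β has letters < c
    have hβb : ∀ j ∈ β, j.val < c := by
      intro j hj
      have hj1 : j.val < c + 1 := hb j (by rw [hw]; simp [hj])
      by_contra hcon
      have hji : j = i := Fin.ext (by omega)
      obtain ⟨β₁, β₂, hβ⟩ := List.append_of_mem hj
      have hfact : w = α ++ [i] ++ β₁ ++ [i] ++ β₂ := by
        rw [hw, hβ, hji]; simp
      obtain ⟨⟨k, hk, hik⟩, -⟩ := hwc α β₁ β₂ i hfact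
      have : k.val < c + 1 := hb k (by rw [hfact]; simp [hk])
      have : i.val < k.val := hik
      omega
    -- β is canonical
    have hβc : Canonical β := canonical_suffix (a := α ++ [i]) (by
      rw [show (α ++ [i]) ++ β = α ++ i :: β by simp, ← hw]; exact hwc)
    have hβ : β = descList n 1 c := ih (by omega) β hβc hβb (by simpa using hscan.symm)
    -- α is empty
    have hαnil : α = [] := by
      by_contra hαne
      obtain ⟨x, hxα, hxmin⟩ := exists_min α hαne
      obtain ⟨α₁, α₂, hαsplit, hxnot⟩ := exists_last_occ hxα
      have hxc : x.val < c := by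
        have h1 : x.val < c + 1 := hb x (by rw [hw]; simp [hxα])
        have h2 := hα x hxα
        omega
      have hxβ : x ∈ β := by rw [hβ]; exact (mem_descList c x).2 hxc
      obtain ⟨β₁, β₂, hβsplit⟩ := List.append_of_mem hxβ
      have hfact : w = α₁ ++ [x] ++ (α₂ ++ i :: β₁) ++ [x] ++ β₂ := by
        rw [hw, hαsplit, hβsplit]; simp
      obtain ⟨-, k, hk, hkx⟩ := hwc α₁ (α₂ ++ i :: β₁) β₂ x hfact
      have hkx' : k.val < x.val := hkx
      rcases List.mem_append.1 hk with hk | hk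
      · exact absurd (hxmin k (by rw [hαsplit]; simp [hk])) (by omega)
      · rcases List.mem_cons.1 hk with rfl | hk
        · omega
        · -- k ∈ β₁, but β is strictly descending and x comes after β₁
          have hpw := pairwise_descList (n := n) c
          rw [← hβ, hβsplit] at hpw
          have := (List.pairwise_append.1 hpw).2.2 k hk x (List.mem_cons_self)
          have : x.val < k.val := this
          omega
    rw [hαnil] at hw
    rw [hw, hieq, hβ, ← descList_succ c (by omega)]
    rfl

/-- If `w` is canonical, `u` is a word over `{a_2, …, a_n}`, and `φ(w u) = f`,
then `w` is the word `a_n a_{n-1} ⋯ a_2 a_1`. -/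
theorem canonical_eq_f_word (n : ℕ) (hn : 1 ≤ n) (w u : List (Fin n))
    (hwc : Canonical w) (hu0 : ∀ i ∈ u, i.val ≠ 0)
    (h : phiL n (w ++ u) = fEl n) : w = descList n 1 n := by
  have h2 := congrArg (PhiK n) h
  rw [PhiK_phiL, fEl, PhiK_phiL] at h2
  have h3 : ∀ m, scan (w ++ u) m = scan (descList n 1 n) m :=
    fun m => congrFun (MulOpposite.op_injective h2) m
  have h4 : scan (w ++ u) n = 0 := by rw [h3 n, scan_descList n (le_refl n)]
  rw [scan_append] at h4
  have h5 : scan w n = 0 := by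
    by_contra hcon
    have := one_le_scan u hu0 (scan w n) (by omega)
    omega
  exact main_comb n (le_refl n) w hwc (fun i _ => i.isLt) h5

end Kiselman
end
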